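/- A vertex-faithful simplicial sphere X has at most (|X2| − 2)/2 non-equivalent re-embeddings on simplicial projective planes; equivalently, the edge graph E(X) contains at most (|X2| − 2)/2 subgraphs isomorphic to K4. -/

import Mathlib

/-- A (closed) simplicial surface: vertices `V`, edges `E`, faces `F` with
incidence relations satisfying the axioms of Definition 2.3, including the
umbrella condition. -/
structure SimplicialSurface (V E F : Type) where
  vinc : V → E → Prop
  einc : E → F → Prop
  vfinc : V → F → Prop
  vfinc_iff : ∀ v f, vfinc v f ↔ ∃ e, vinc v e ∧ einc e f
  edge_two_vertices : ∀ e, {v | vinc v e}.ncard = 2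
  edge_two_faces : ∀ e, {f | einc e f}.ncard = 2
  face_three_edges : ∀ f, {e | einc e f}.ncard = 3
  face_three_vertices : ∀ f, {v | vfinc v f}.ncard = 3
  face_vertex_two_edges : ∀ f v, vfinc v f → {e | einc e f ∧ vinc v e}.ncard = 2
  /-- Umbrella condition: the faces incident to `v` can be arranged in a cyclic
  sequence, consecutive members sharing an edge through `v`. -/
  umbrella : ∀ v, ∃ n, 2 ≤ n ∧ ∃ (fa : ZMod n → F) (ed : ZMod n → E),
    Function.Injective fa ∧ Function.Injective ed ∧
    (∀ f, vfinc v f ↔ ∃ i, fa i = f) ∧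
    (∀ e, vinc v e ↔ ∃ i, ed i = e) ∧
    (∀ i, einc (ed i) (fa i) ∧ einc (ed i) (fa (i + 1)))

variable {V E F : Type}

/-- Edges and faces are uniquely determined by their incident vertex sets. -/
def SimplicialSurface.VertexFaithful (S : SimplicialSurface V E F) : Prop :=
  (∀ e e', {v | S.vinc v e} = {v | S.vinc v e'} → e = e') ∧
  (∀ f f', {v | S.vfinc v f} = {v | S.vfinc v f'} → f = f')

/-- The face graph: nodes are faces, two faces adjacent iff they share an edge. -/
def SimplicialSurface.faceGraph (S : SimplicialSurface V E F) : SimpleGraph F :=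
  SimpleGraph.fromRel (fun f g => ∃ e, S.einc e f ∧ S.einc e g)

/-- The edge graph: nodes are vertices, two vertices adjacent iff they lie on a common edge. -/
def SimplicialSurface.edgeGraph (S : SimplicialSurface V E F) : SimpleGraph V :=
  SimpleGraph.fromRel (fun v w => ∃ e, S.vinc v e ∧ S.vinc w e)

/-- Euler characteristic `|X0| - |X1| + |X2|`. -/
noncomputable def SimplicialSurface.eulerChar (_S : SimplicialSurface V E F) : ℤ :=
  (Nat.card V : ℤ) - (Nat.card E : ℤ) + (Nat.card F : ℤ)

/-!
Over `𝔽₂` the face coboundaries of a simplicial sphere are exactly the cycles of its edge graph: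
the face graph and the edge graph are connected, so both coboundary maps have kernel of dimension
at most one, and Euler's formula closes the dimension count. Hence every triangle of the edge
graph separates the sphere, and so the chords of the link of a vertex `v`, the cycle of its
`deg v` neighbours in umbrella order, cannot cross. A `K₄` through `v` is a triangle on this link,
and distinct triangles of a cycle with non-crossing chords have distinct middle vertices, so there
are at most `deg v - 2` of them. Summing over `v`,
`4 · #K₄ ≤ ∑ (deg v - 2) = 2 |X₁| - 2 |X₀| = 2 |X₂| - 4`.
-/

open Finset

lemma Set.eq_pair_of_ncard_eq_two {α : Type*} {s : Set α} (hs : s.ncard = 2) {a b : α} (ha : a ∈ s)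
    (hb : b ∈ s) (hab : a ≠ b) : s = {a, b} :=
  (Set.eq_of_subset_of_ncard_le (Set.insert_subset ha (Set.singleton_subset_iff.2 hb))
    (by rw [hs, Set.ncard_pair hab]) (Set.finite_of_ncard_pos (by omega))).symm

lemma Finset.sum_ite_mul_of_setOf_eq_pair {α R : Type*} [Fintype α] [DecidableEq α]
    [NonAssocSemiring R] {P : α → Prop} [DecidablePred P] {a b : α} (hP : {x | P x} = {a, b}) (hab : a ≠ b)
    (φ : α → R) : ∑ x, (if P x then 1 else 0) * φ x = φ a + φ b := by
  have : univ.filter P = {a, b} := by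
    ext x
    simpa using Set.ext_iff.1 hP x
  simp only [ite_mul, one_mul, zero_mul, ← sum_filter, this, sum_pair hab]

lemma SimpleGraph.Preconnected.apply_eq_of_forall_adj {α β : Type*} {G : SimpleGraph α}
    (hG : G.Preconnected) {φ : α → β} (hφ : ∀ a b, G.Adj a b → φ a = φ b) (a b : α) :
    φ a = φ b := by
  obtain ⟨p⟩ := hG a b
  induction p with
  | nil => rfl
  | cons h _ ih => exact (hφ _ _ h).trans ih

lemma Submodule.finrank_le_one_of_forall_apply_eq {α K : Type*} [Fintype α] [Field K]
    (W : Submodule K (α → K)) (hW : ∀ φ ∈ W, ∀ a b, φ a = φ b) : Module.finrank K W ≤ 1 := by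
  have hle : W ≤ K ∙ (fun _ ↦ 1) := fun φ hφ ↦ by
    rcases isEmpty_or_nonempty α with hα | ⟨⟨a⟩⟩
    · exact Submodule.mem_span_singleton.2 ⟨0, funext hα.elim⟩
    · exact Submodule.mem_span_singleton.2 ⟨φ a, funext fun b ↦ by simp [hW φ hφ a b]⟩
  exact (Submodule.finrank_mono hle).trans ((finrank_span_le_card _).trans (by simp))

lemma SimpleGraph.sum_card_filter_mem_cliqueFinset {α : Type*} [Fintype α] [DecidableEq α]
    (G : SimpleGraph α) [DecidableRel G.Adj] (k : ℕ) :
    ∑ a, #{s ∈ G.cliqueFinset k | a ∈ s} = k * #(G.cliqueFinset k) := by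
  have h := sum_card_bipartiteAbove_eq_sum_card_bipartiteBelow (s := univ) (t := G.cliqueFinset k)
    (r := (· ∈ ·))
  simp only [bipartiteAbove, bipartiteBelow] at h
  rw [h, sum_congr rfl fun s hs ↦ ?_, sum_const, smul_eq_mul, mul_comm]
  simpa using (G.mem_cliqueFinset_iff.1 hs).card_eq

lemma Finset.eq_triple_orderEmbOfFin {α : Type*} [LinearOrder α] (t : Finset α) (h : #t = 3) :
    t = {t.orderEmbOfFin h 0, t.orderEmbOfFin h 1, t.orderEmbOfFin h 2} := by
  ext x
  rw [← mem_coe, ← t.range_orderEmbOfFin h, Set.mem_range, Fin.exists_fin_succ,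
    Fin.exists_fin_succ, Fin.exists_fin_one]
  simp only [eq_comm, mem_insert, mem_singleton]
  rfl

/-- Distinct triangles have distinct middle vertices, by non-crossing, and a middle vertex lies
in `[1, n - 2]`. -/
theorem card_add_two_le_of_noncrossing {n : ℕ} (hn : 2 ≤ n) {R : ℕ → ℕ → Prop}
    (hR : ∀ ⦃a b c d⦄, a < b → b < c → c < d → d < n → R a c → ¬ R b d)
    {T : Finset (Finset ℕ)}
    (hT : ∀ t ∈ T, t ⊆ range n ∧ #t = 3 ∧ ∀ p ∈ t, ∀ q ∈ t, p < q → R p q) :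
    #T + 2 ≤ n := by
  let mid : Finset ℕ → ℕ := fun t ↦ if h : #t = 3 then t.orderEmbOfFin h 1 else 0
  have hmid : ∀ t ∈ T, ∃ p r, p < mid t ∧ mid t < r ∧ r < n ∧ t = {p, mid t, r} := by
    intro t ht
    obtain ⟨hsub, h3, -⟩ := hT t ht
    have hg := (t.orderEmbOfFin h3).strictMono
    rw [show mid t = t.orderEmbOfFin h3 1 from dif_pos h3]
    exact ⟨_, _, hg (by decide), hg (by decide), mem_range.1 (hsub (t.orderEmbOfFin_mem h3 2)),
      t.eq_triple_orderEmbOfFin h3⟩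
  have hmaps : ∀ t ∈ T, mid t ∈ Icc 1 (n - 2) := fun t ht ↦ by
    obtain ⟨p, r, hp, hr, hrn, -⟩ := hmid t ht
    rw [mem_Icc]
    omega
  have hinj : Set.InjOn mid T := by
    intro t ht t' ht' h
    obtain ⟨p, r, hp, hr, hrn, htq⟩ := hmid t ht
    obtain ⟨p', r', hp', hr', hrn', htq'⟩ := hmid t' ht'
    obtain ⟨-, -, hRt⟩ := hT t ht
    obtain ⟨-, -, hRt'⟩ := hT t' ht'
    rw [htq] at hRt
    rw [htq', ← h] at hRt'
    rw [← h] at hp' hr'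
    rcases lt_trichotomy p p' with hpp | rfl | hpp
    · exact (hR hpp hp' hr' hrn' (hRt p (by simp) _ (by simp) hp)
        (hRt' p' (by simp) r' (by simp) (hp'.trans hr'))).elim
    · rcases lt_trichotomy r r' with hrr | rfl | hrr
      · exact (hR hp hr hrr hrn' (hRt p (by simp) r (by simp) (hp.trans hr))
          (hRt' _ (by simp) r' (by simp) hr')).elim
      · rw [htq, htq', h]
      · exact (hR hp hr' hrr hrn (hRt' p (by simp) r' (by simp) (hp.trans hr'))
          (hRt _ (by simp) r (by simp) hr)).elim
    · exact (hR hpp hp hr hrn (hRt' p' (by simp) _ (by simp) hp')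
        (hRt p (by simp) r (by simp) (hp.trans hr))).elim
  have := card_le_card_of_injOn mid hmaps hinj
  rw [Nat.card_Icc] at this
  omega

namespace SimplicialSurface

open scoped Classical

variable (S : SimplicialSurface V E F)

lemma edgeGraph_adj {u w : V} :
    S.edgeGraph.Adj u w ↔ u ≠ w ∧ ∃ e, S.vinc u e ∧ S.vinc w e := by
  rw [edgeGraph, SimpleGraph.fromRel_adj]
  exact and_congr_right fun _ ↦ or_iff_left_of_imp fun ⟨e, hw, hu⟩ ↦ ⟨e, hu, hw⟩

lemma faceGraph_adj {f g : F} :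
    S.faceGraph.Adj f g ↔ f ≠ g ∧ ∃ e, S.einc e f ∧ S.einc e g := by
  rw [faceGraph, SimpleGraph.fromRel_adj]
  exact and_congr_right fun _ ↦ or_iff_left_of_imp fun ⟨e, hg, hf⟩ ↦ ⟨e, hf, hg⟩

lemma card_filter_vinc_eq_two [Fintype V] (e : E) : #{v | S.vinc v e} = 2 := by
  simpa [Set.ncard_eq_toFinset_card'] using S.edge_two_vertices e

lemma card_filter_einc_eq_two [Fintype F] (e : E) : #{f | S.einc e f} = 2 := by
  simpa [Set.ncard_eq_toFinset_card'] using S.edge_two_faces e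

lemma card_filter_einc_eq_three [Fintype E] (f : F) : #{e | S.einc e f} = 3 := by
  simpa [Set.ncard_eq_toFinset_card'] using S.face_three_edges f

lemma sum_card_filter_vinc [Fintype V] [Fintype E] :
    ∑ v, #{e | S.vinc v e} = 2 * Fintype.card E := by
  have h := sum_card_bipartiteAbove_eq_sum_card_bipartiteBelow (s := univ) (t := univ) (r := S.vinc)
  simp only [bipartiteAbove, bipartiteBelow, card_filter_vinc_eq_two, sum_const, card_univ,
    smul_eq_mul] at h
  rw [h, mul_comm]

lemma two_mul_card_edges (S : SimplicialSurface V E F) [Fintype E] [Fintype F] :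
    2 * Fintype.card E = 3 * Fintype.card F := by
  have h := sum_card_bipartiteAbove_eq_sum_card_bipartiteBelow (s := univ) (t := univ) (r := S.einc)
  simp only [bipartiteAbove, bipartiteBelow, card_filter_einc_eq_two, card_filter_einc_eq_three,
    sum_const, card_univ, smul_eq_mul] at h
  rw [mul_comm, h, mul_comm]

variable {S}

lemma vfinc_of_vinc {v : V} {e : E} {f : F} (hv : S.vinc v e) (hf : S.einc e f) :
    S.vfinc v f :=
  (S.vfinc_iff v f).2 ⟨e, hv, hf⟩

lemma setOf_vinc_eq_pair {e : E} {u w : V} (hu : S.vinc u e) (hw : S.vinc w e) (huw : u ≠ w) :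
    {z | S.vinc z e} = {u, w} :=
  Set.eq_pair_of_ncard_eq_two (S.edge_two_vertices e) hu hw huw

lemma setOf_einc_eq_pair {e : E} {f g : F} (hf : S.einc e f) (hg : S.einc e g) (hfg : f ≠ g) :
    {h | S.einc e h} = {f, g} :=
  Set.eq_pair_of_ncard_eq_two (S.edge_two_faces e) hf hg hfg

lemma exists_vinc_ne {v : V} {e : E} (hv : S.vinc v e) : ∃ w, w ≠ v ∧ S.vinc w e := by
  obtain ⟨a, b, hab, hs⟩ := Set.ncard_eq_two.1 (S.edge_two_vertices e)
  have hmem : ∀ z, S.vinc z e ↔ z = a ∨ z = b := fun z ↦ by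
    simpa using Set.ext_iff.1 hs z
  rcases (hmem v).1 hv with rfl | rfl
  exacts [⟨b, hab.symm, (hmem b).2 (.inr rfl)⟩, ⟨a, hab, (hmem a).2 (.inl rfl)⟩]

lemma exists_vinc (e : E) : ∃ v, S.vinc v e :=
  Set.nonempty_of_ncard_ne_zero (s := {v | S.vinc v e}) (by rw [S.edge_two_vertices]; norm_num)

lemma exists_einc (e : E) : ∃ f, S.einc e f :=
  Set.nonempty_of_ncard_ne_zero (s := {f | S.einc e f}) (by rw [S.edge_two_faces]; norm_num)

/-- In a vertex-faithful surface the two edges of a face through a vertex `u` end at distinct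
vertices, so they reach both other vertices of the face. -/
lemma edgeGraph_adj_of_vfinc (hvf : S.VertexFaithful) {f : F} {u w : V} (hu : S.vfinc u f)
    (hw : S.vfinc w f) (huw : u ≠ w) : S.edgeGraph.Adj u w := by
  obtain ⟨e₁, e₂, he, hs⟩ := Set.ncard_eq_two.1 (S.face_vertex_two_edges f u hu)
  have hmem : ∀ e ∈ ({e₁, e₂} : Set E), S.einc e f ∧ S.vinc u e := fun e h ↦ by
    rw [← hs] at h; exact h
  obtain ⟨hf₁, hu₁⟩ := hmem e₁ (by simp)
  obtain ⟨hf₂, hu₂⟩ := hmem e₂ (by simp)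
  obtain ⟨z₁, hz₁u, hz₁⟩ := exists_vinc_ne hu₁
  obtain ⟨z₂, hz₂u, hz₂⟩ := exists_vinc_ne hu₂
  have hz : z₁ ≠ z₂ := by
    rintro rfl
    exact he (hvf.1 _ _ (by rw [setOf_vinc_eq_pair hu₁ hz₁ hz₁u.symm,
      setOf_vinc_eq_pair hu₂ hz₂ hz₁u.symm]))
  have hface : {z | S.vfinc z f} = {u, z₁, z₂} :=
    (Set.eq_of_subset_of_ncard_le
      (by simp [Set.insert_subset_iff, hu, vfinc_of_vinc hz₁ hf₁, vfinc_of_vinc hz₂ hf₂])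
      (by rw [S.face_three_vertices,
        Set.ncard_eq_three.2 ⟨u, z₁, z₂, hz₁u.symm, hz₂u.symm, hz, rfl⟩])
      (Set.finite_of_ncard_pos (by rw [S.face_three_vertices]; norm_num))).symm
  have hw' : w = u ∨ w = z₁ ∨ w = z₂ := by simpa using Set.ext_iff.1 hface w |>.1 hw
  rw [edgeGraph_adj]
  rcases hw' with rfl | rfl | rfl
  exacts [absurd rfl huw, ⟨huw, e₁, hu₁, hz₁⟩, ⟨huw, e₂, hu₂, hz₂⟩]

variable (S) in
structure Umbrella (v : V) where
  n : ℕ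
  two_le : 2 ≤ n
  fa : ZMod n → F
  ed : ZMod n → E
  fa_injective : Function.Injective fa
  ed_injective : Function.Injective ed
  vfinc_iff : ∀ f, S.vfinc v f ↔ ∃ i, fa i = f
  vinc_iff : ∀ e, S.vinc v e ↔ ∃ i, ed i = e
  einc_ed : ∀ i, S.einc (ed i) (fa i) ∧ S.einc (ed i) (fa (i + 1))

variable (S) in
lemma nonempty_umbrella (v : V) : Nonempty (S.Umbrella v) := by
  obtain ⟨n, hn, fa, ed, h₁, h₂, h₃, h₄, h₅⟩ := S.umbrella v
  exact ⟨⟨n, hn, fa, ed, h₁, h₂, h₃, h₄, h₅⟩⟩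

namespace Umbrella

variable {v : V} (U : S.Umbrella v)

instance : NeZero U.n := ⟨by have := U.two_le; omega⟩

lemma vinc_ed (i : ZMod U.n) : S.vinc v (U.ed i) := (U.vinc_iff _).2 ⟨i, rfl⟩

lemma vfinc_fa (i : ZMod U.n) : S.vfinc v (U.fa i) := (U.vfinc_iff _).2 ⟨i, rfl⟩

lemma fa_ne_fa_add_one (i : ZMod U.n) : U.fa i ≠ U.fa (i + 1) := by
  have : Fact (1 < U.n) := ⟨U.two_le⟩
  exact fun h ↦ one_ne_zero (add_eq_left.1 (U.fa_injective h).symm)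

lemma natCast_injOn : Set.InjOn (fun m : ℕ ↦ (m : ZMod U.n)) (Set.Iio U.n) :=
  fun m hm m' hm' h ↦ by
    simpa [Nat.mod_eq_of_lt hm, Nat.mod_eq_of_lt hm'] using (ZMod.natCast_eq_natCast_iff' ..).1 h

/-- Indexed by `ℕ`, through the cast to `ZMod U.n`, so that positions in the cyclic order can be
compared with `<`. -/
noncomputable def nbr (m : ℕ) : V := (exists_vinc_ne (U.vinc_ed m)).choose

lemma nbr_ne (m : ℕ) : U.nbr m ≠ v := (exists_vinc_ne (U.vinc_ed m)).choose_spec.1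

lemma vinc_nbr (m : ℕ) : S.vinc (U.nbr m) (U.ed m) := (exists_vinc_ne (U.vinc_ed m)).choose_spec.2

lemma setOf_vinc_ed (m : ℕ) : {z | S.vinc z (U.ed m)} = {v, U.nbr m} :=
  setOf_vinc_eq_pair (U.vinc_ed m) (U.vinc_nbr m) (U.nbr_ne m).symm

lemma nbr_injOn (hvf : S.VertexFaithful) : Set.InjOn U.nbr (Set.Iio U.n) := fun m hm m' hm' h ↦
  U.natCast_injOn hm hm' (U.ed_injective (hvf.1 _ _ (by rw [U.setOf_vinc_ed, U.setOf_vinc_ed, h])))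

lemma exists_nbr_eq {w : V} (h : S.edgeGraph.Adj v w) : ∃ m < U.n, U.nbr m = w := by
  obtain ⟨hvw, e, hv, hw⟩ := S.edgeGraph_adj.1 h
  obtain ⟨i, rfl⟩ := (U.vinc_iff e).1 hv
  have hw' : w = v ∨ w = U.nbr i.val := by
    simpa using Set.ext_iff.1 (U.setOf_vinc_ed i.val) w |>.1 (by rwa [ZMod.natCast_zmod_val])
  exact ⟨i.val, ZMod.val_lt i, (hw'.resolve_left hvw.symm).symm⟩

lemma vfinc_nbr_fa (m : ℕ) : S.vfinc (U.nbr m) (U.fa m) :=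
  vfinc_of_vinc (U.vinc_nbr m) (U.einc_ed m).1

lemma vfinc_nbr_fa_succ (m : ℕ) : S.vfinc (U.nbr m) (U.fa (m + 1 : ℕ)) := by
  rw [Nat.cast_succ]
  exact vfinc_of_vinc (U.vinc_nbr m) (U.einc_ed m).2

lemma card_filter_vinc [Fintype E] : #{e | S.vinc v e} = U.n := by
  have : ({e | S.vinc v e} : Finset E) = univ.image U.ed := by
    ext e
    simp [U.vinc_iff e]
  rw [this, card_image_of_injective _ U.ed_injective, card_univ, ZMod.card]

end Umbrella

variable (S) in
lemma exists_vfinc (v : V) : ∃ f, S.vfinc v f :=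
  let ⟨U⟩ := S.nonempty_umbrella v
  ⟨U.fa 0, U.vfinc_fa 0⟩

lemma edgeGraph_preconnected (hvf : S.VertexFaithful) (hconn : S.faceGraph.Connected) :
    S.edgeGraph.Preconnected := by
  have hface : ∀ {f u w}, S.vfinc u f → S.vfinc w f → S.edgeGraph.Reachable u w := by
    intro f u w hu hw
    by_cases huw : u = w
    · exact huw ▸ .rfl
    · exact (edgeGraph_adj_of_vfinc hvf hu hw huw).reachable
  have hwalk : ∀ {f g} (_ : S.faceGraph.Walk f g) {u w},
      S.vfinc u f → S.vfinc w g → S.edgeGraph.Reachable u w := by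
    intro f g p
    induction p with
    | nil => exact hface
    | cons h _ ih =>
      intro u w hu hw
      obtain ⟨-, e, hef, hef'⟩ := S.faceGraph_adj.1 h
      obtain ⟨z, hz⟩ := exists_vinc e
      exact (hface hu (vfinc_of_vinc hz hef)).trans (ih (vfinc_of_vinc hz hef') hw)
  intro u w
  obtain ⟨f, hf⟩ := S.exists_vfinc u
  obtain ⟨g, hg⟩ := S.exists_vfinc w
  obtain ⟨p⟩ := hconn.preconnected f g
  exact hwalk p hf hg

section Homology

open Matrix

variable (S) in
/-- Edge–face incidence over `𝔽₂`; acting on face cochains it is the coboundary map. -/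
noncomputable def faceInc : Matrix E F (ZMod 2) := .of fun e f ↦ if S.einc e f then 1 else 0

variable (S) in
/-- Edge–vertex incidence over `𝔽₂`: `vertexInc` is the coboundary on vertex cochains and its
transpose the boundary on edge chains. -/
noncomputable def vertexInc : Matrix E V (ZMod 2) := .of fun e v ↦ if S.vinc v e then 1 else 0

lemma faceInc_mulVec_apply [Fintype F] {e : E} {f g : F} (hf : S.einc e f) (hg : S.einc e g)
    (hfg : f ≠ g) (φ : F → ZMod 2) : (S.faceInc *ᵥ φ) e = φ f + φ g :=
  sum_ite_mul_of_setOf_eq_pair (setOf_einc_eq_pair hf hg hfg) hfg φ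

lemma vertexInc_mulVec_apply [Fintype V] {e : E} {u w : V} (hu : S.vinc u e) (hw : S.vinc w e)
    (huw : u ≠ w) (x : V → ZMod 2) : (S.vertexInc *ᵥ x) e = x u + x w :=
  sum_ite_mul_of_setOf_eq_pair (setOf_vinc_eq_pair hu hw huw) huw x

lemma vertexInc_transpose_mulVec_single [Fintype E] {e : E} {u w : V} (hu : S.vinc u e)
    (hw : S.vinc w e) (huw : u ≠ w) :
    S.vertexIncᵀ *ᵥ Pi.single e 1 = Pi.single u 1 + Pi.single w 1 := by
  ext z
  have hz : S.vinc z e ↔ z = u ∨ z = w := by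
    simpa using Set.ext_iff.1 (setOf_vinc_eq_pair hu hw huw) z
  by_cases hzu : z = u
  · subst hzu; simp [vertexInc, hu, huw]
  · by_cases hzw : z = w
    · subst hzw; simp [vertexInc, hw, hzu]
    · simp [vertexInc, hz, hzu, hzw]

variable (S) in
/-- Each vertex of a face lies on exactly two of its edges: the boundary of a coboundary is zero. -/
lemma vertexInc_transpose_mul_faceInc [Fintype E] : S.vertexIncᵀ * S.faceInc = 0 := by
  ext v f
  simp only [Matrix.mul_apply, Matrix.transpose_apply, vertexInc, faceInc, Matrix.of_apply,
    ite_zero_mul_ite_zero, one_mul, sum_boole, Matrix.zero_apply]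
  by_cases hvf : S.vfinc v f
  · have h2 := S.face_vertex_two_edges f v hvf
    rw [Set.ncard_eq_toFinset_card'] at h2
    simp only [Set.toFinset_ofPred] at h2
    simp_rw [and_comm (a := S.vinc v _), h2]
    rfl
  · have : ({e | S.vinc v e ∧ S.einc e f} : Finset E) = ∅ :=
      filter_eq_empty_iff.2 fun e _ he ↦ hvf (vfinc_of_vinc he.1 he.2)
    simp [this]

lemma finrank_ker_faceInc_le_one [Fintype F] (hconn : S.faceGraph.Connected) :
    Module.finrank (ZMod 2) (LinearMap.ker S.faceInc.mulVecLin) ≤ 1 := by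
  refine Submodule.finrank_le_one_of_forall_apply_eq _ fun φ hφ ↦
    hconn.preconnected.apply_eq_of_forall_adj fun f g hfg ↦ ?_
  obtain ⟨hne, e, hf, hg⟩ := S.faceGraph_adj.1 hfg
  rw [← CharTwo.add_eq_zero, ← faceInc_mulVec_apply hf hg hne]
  exact congrFun (LinearMap.mem_ker.1 hφ) e

lemma finrank_ker_vertexInc_le_one [Fintype V] (hvf : S.VertexFaithful)
    (hconn : S.faceGraph.Connected) :
    Module.finrank (ZMod 2) (LinearMap.ker S.vertexInc.mulVecLin) ≤ 1 := by
  refine Submodule.finrank_le_one_of_forall_apply_eq _ fun x hx ↦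
    (edgeGraph_preconnected hvf hconn).apply_eq_of_forall_adj fun u w huw ↦ ?_
  obtain ⟨hne, e, hu, hw⟩ := S.edgeGraph_adj.1 huw
  rw [← CharTwo.add_eq_zero, ← vertexInc_mulVec_apply hu hw hne]
  exact congrFun (LinearMap.mem_ker.1 hx) e

/-- Connectedness of the face graph and of the edge graph bounds the two kernels, and Euler's
formula closes the dimension count. -/
lemma range_faceInc_eq_ker [Fintype V] [Fintype E] [Fintype F] (hvf : S.VertexFaithful)
    (hconn : S.faceGraph.Connected) (hsphere : S.eulerChar = 2) :
    LinearMap.range S.faceInc.mulVecLin = LinearMap.ker S.vertexIncᵀ.mulVecLin := by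
  have hle : LinearMap.range S.faceInc.mulVecLin ≤ LinearMap.ker S.vertexIncᵀ.mulVecLin := by
    rintro _ ⟨φ, rfl⟩
    rw [LinearMap.mem_ker, mulVecLin_apply, mulVecLin_apply, mulVec_mulVec,
      S.vertexInc_transpose_mul_faceInc, zero_mulVec]
  refine Submodule.eq_of_le_of_finrank_le hle ?_
  have hF := LinearMap.finrank_range_add_finrank_ker S.faceInc.mulVecLin
  have hV := LinearMap.finrank_range_add_finrank_ker S.vertexInc.mulVecLin
  have hE := LinearMap.finrank_range_add_finrank_ker S.vertexIncᵀ.mulVecLin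
  have hrank : S.vertexIncᵀ.rank = S.vertexInc.rank := rank_transpose _
  have := finrank_ker_faceInc_le_one hconn
  have := finrank_ker_vertexInc_le_one hvf hconn
  simp only [eulerChar, Nat.card_eq_fintype_card] at hsphere
  simp only [Module.finrank_fintype_fun_eq_card] at hF hV hE
  simp only [Matrix.rank] at hrank
  omega

lemma vertexInc_transpose_mulVec_triangle [Fintype E] {u₁ u₂ u₃ : V} {e₁ e₂ e₃ : E}
    (h₁ : S.vinc u₁ e₁ ∧ S.vinc u₂ e₁) (h₂ : S.vinc u₂ e₂ ∧ S.vinc u₃ e₂)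
    (h₃ : S.vinc u₃ e₃ ∧ S.vinc u₁ e₃) (h₁₂ : u₁ ≠ u₂) (h₂₃ : u₂ ≠ u₃) (h₃₁ : u₃ ≠ u₁) :
    S.vertexIncᵀ *ᵥ (Pi.single e₁ 1 + Pi.single e₂ 1 + Pi.single e₃ 1) = 0 := by
  rw [mulVec_add, mulVec_add, vertexInc_transpose_mulVec_single h₁.1 h₁.2 h₁₂,
    vertexInc_transpose_mulVec_single h₂.1 h₂.2 h₂₃,
    vertexInc_transpose_mulVec_single h₃.1 h₃.2 h₃₁]
  ext z
  simp only [Pi.add_apply, Pi.zero_apply]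
  generalize (Pi.single u₁ 1 : V → ZMod 2) z = a
  generalize (Pi.single u₂ 1 : V → ZMod 2) z = b
  generalize (Pi.single u₃ 1 : V → ZMod 2) z = c
  revert a b c
  decide

end Homology

section Crossing

open Matrix

namespace Umbrella

variable {v : V} (U : S.Umbrella v)

lemma eq_or_eq_nbr_of_vinc {z : V} {m : ℕ} (hz : S.vinc z (U.ed m)) : z = v ∨ z = U.nbr m := by
  simpa using Set.ext_iff.1 (U.setOf_vinc_ed m) z |>.1 hz

lemma faceInc_mulVec_ed [Fintype F] (φ : F → ZMod 2) (i : ZMod U.n) :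
    (S.faceInc *ᵥ φ) (U.ed i) = φ (U.fa i) + φ (U.fa (i + 1)) :=
  faceInc_mulVec_apply (U.einc_ed i).1 (U.einc_ed i).2 (U.fa_ne_fa_add_one i) φ

lemma apply_fa_natCast [Fintype F] (φ : F → ZMod 2) (m : ℕ) :
    φ (U.fa m) = φ (U.fa 0) + ∑ t ∈ range m, (S.faceInc *ᵥ φ) (U.ed t) := by
  induction m with
  | zero => simp
  | succ m ih =>
    rw [sum_range_succ, ← add_assoc, ← ih, U.faceInc_mulVec_ed, Nat.cast_succ,
      CharTwo.add_cancel_left]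

end Umbrella

lemma apply_eq_of_faceInc_mulVec_eq_zero [Fintype F] {φ : F → ZMod 2} {u : V}
    (hφ : ∀ e, S.vinc u e → (S.faceInc *ᵥ φ) e = 0) {f g : F} (hf : S.vfinc u f)
    (hg : S.vfinc u g) : φ f = φ g := by
  obtain ⟨U⟩ := S.nonempty_umbrella u
  have h : ∀ i, φ (U.fa i) = φ (U.fa 0) := fun i ↦ by
    rw [← ZMod.natCast_zmod_val i, U.apply_fa_natCast φ, add_eq_left]
    exact sum_eq_zero fun t _ ↦ hφ _ (U.vinc_ed _)
  obtain ⟨i, rfl⟩ := (U.vfinc_iff f).1 hf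
  obtain ⟨j, rfl⟩ := (U.vfinc_iff g).1 hg
  rw [h i, h j]

lemma Umbrella.apply_fa_of_faceInc_mulVec_ed [Fintype F] {v : V} (U : S.Umbrella v)
    {φ : F → ZMod 2} {a c : ℕ} (hφ : ∀ t < U.n,
      (S.faceInc *ᵥ φ) (U.ed t) = (if t = a then 1 else 0) + (if t = c then 1 else 0))
    {m : ℕ} (hm : m ≤ U.n) :
    φ (U.fa m) = φ (U.fa 0) + ((if a < m then 1 else 0) + (if c < m then 1 else 0)) := by
  rw [U.apply_fa_natCast φ, sum_congr rfl fun t ht ↦ hφ t (by simp at ht; omega),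
    sum_add_distrib, sum_ite_eq', sum_ite_eq']
  simp only [mem_range]

/-- Chords of the link of `v` do not cross. The triangle `v, nbr a, nbr c` is the coboundary
of a set `φ` of faces; going around `v`, membership in `φ` flips exactly at `ed a` and `ed c`,
so the faces at `nbr b` and at `nbr d` lie on different sides, whereas an edge from `nbr b` to
`nbr d` would connect them without meeting the triangle. -/
theorem Umbrella.not_adj_nbr_of_lt [Fintype V] [Fintype E] [Fintype F] (hvf : S.VertexFaithful)
    (hconn : S.faceGraph.Connected) (hsphere : S.eulerChar = 2) {v : V} (U : S.Umbrella v)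
    {a b c d : ℕ} (hab : a < b) (hbc : b < c) (hcd : c < d) (hdn : d < U.n)
    (hac : S.edgeGraph.Adj (U.nbr a) (U.nbr c)) : ¬ S.edgeGraph.Adj (U.nbr b) (U.nbr d) := by
  intro hbd
  have hinj {m m' : ℕ} (hm : m < U.n) (hm' : m' < U.n) (h : m ≠ m') : U.nbr m ≠ U.nbr m' :=
    fun h' ↦ h (U.nbr_injOn hvf hm hm' h')
  obtain ⟨hne_ac, e, hae, hce⟩ := S.edgeGraph_adj.1 hac
  have he : ∀ {z}, S.vinc z e → z = U.nbr a ∨ z = U.nbr c := fun hz ↦ by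
    simpa using Set.ext_iff.1 (setOf_vinc_eq_pair hae hce hne_ac) _ |>.1 hz
  set τ : E → ZMod 2 := Pi.single (U.ed a) 1 + Pi.single e 1 + Pi.single (U.ed c) 1 with hτ
  obtain ⟨φ, hφ⟩ : τ ∈ LinearMap.range S.faceInc.mulVecLin := by
    rw [range_faceInc_eq_ker hvf hconn hsphere, LinearMap.mem_ker, mulVecLin_apply]
    exact vertexInc_transpose_mulVec_triangle ⟨U.vinc_ed a, U.vinc_nbr a⟩ ⟨hae, hce⟩
      ⟨U.vinc_nbr c, U.vinc_ed c⟩ (U.nbr_ne a).symm hne_ac (U.nbr_ne c)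
  rw [mulVecLin_apply] at hφ
  have hwind {m : ℕ} (hm : m ≤ U.n) := U.apply_fa_of_faceInc_mulVec_ed (φ := φ) (a := a) (c := c)
    (fun t ht ↦ by
      have hte : U.ed t ≠ e := fun h ↦ (he (h ▸ U.vinc_ed t)).elim
        (U.nbr_ne a ·.symm) (U.nbr_ne c ·.symm)
      have hed : ∀ m < U.n, U.ed t = U.ed m ↔ t = m := fun m hm ↦
        ⟨fun h ↦ U.natCast_injOn ht hm (U.ed_injective h), fun h ↦ h ▸ rfl⟩
      simp [hφ, hτ, Pi.single_apply, hte, hed a (by omega), hed c (by omega)]) hm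
  have hconst {m : ℕ} (hm : m < U.n) (hma : m ≠ a) (hmc : m ≠ c) {f g : F}
      (hf : S.vfinc (U.nbr m) f) (hg : S.vfinc (U.nbr m) g) : φ f = φ g := by
    refine apply_eq_of_faceInc_mulVec_eq_zero (fun e' he' ↦ ?_) hf hg
    have hz := U.nbr_ne m
    have hza := hinj hm (by omega) hma
    have hzc := hinj hm (by omega) hmc
    have h₁ : e' ≠ U.ed a := fun h ↦ by rcases U.eq_or_eq_nbr_of_vinc (h ▸ he') with h | h <;> tauto
    have h₂ : e' ≠ e := fun h ↦ by rcases he (h ▸ he') with h | h <;> tauto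
    have h₃ : e' ≠ U.ed c := fun h ↦ by rcases U.eq_or_eq_nbr_of_vinc (h ▸ he') with h | h <;> tauto
    simp [hφ, hτ, h₁, h₂, h₃]
  obtain ⟨-, e', hbe, hde⟩ := S.edgeGraph_adj.1 hbd
  obtain ⟨g, hg⟩ := exists_einc e'
  have hb := hconst (by omega) (by omega) (by omega) (U.vfinc_nbr_fa_succ b) (vfinc_of_vinc hbe hg)
  have hd := hconst hdn (by omega) (by omega) (vfinc_of_vinc hde hg) (U.vfinc_nbr_fa d)
  have hside := (hwind (m := b + 1) (by omega)).symm.trans (hb.trans (hd.trans (hwind hdn.le)))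
  rw [if_pos (by omega), if_neg (by omega), if_pos (by omega), if_pos (by omega)] at hside
  revert hside
  generalize φ (U.fa 0) = x
  revert x
  decide

end Crossing

theorem Umbrella.card_filter_mem_cliqueFinset_add_two_le [Fintype V] [Fintype E] [Fintype F]
    (hvf : S.VertexFaithful) (hconn : S.faceGraph.Connected) (hsphere : S.eulerChar = 2)
    {v : V} (U : S.Umbrella v) : #{s ∈ S.edgeGraph.cliqueFinset 4 | v ∈ s} + 2 ≤ U.n := by
  set A := {s ∈ S.edgeGraph.cliqueFinset 4 | v ∈ s}
  have hA : ∀ s ∈ A, S.edgeGraph.IsNClique 4 s ∧ v ∈ s := fun s hs ↦ by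
    simpa [A, SimpleGraph.mem_cliqueFinset_iff] using hs
  let pos : Finset V → Finset ℕ := fun s ↦ {m ∈ range U.n | U.nbr m ∈ s}
  have hinjOn : ∀ s, Set.InjOn U.nbr (pos s) :=
    fun s ↦ (U.nbr_injOn hvf).mono fun m hm ↦ mem_range.1 (mem_filter.1 hm).1
  have himage : ∀ s ∈ A, (pos s).image U.nbr = s.erase v := by
    intro s hs
    obtain ⟨hs4, hv⟩ := hA s hs
    ext w
    simp only [pos, mem_image, mem_filter, mem_range, mem_erase]
    constructor
    · rintro ⟨m, ⟨-, hms⟩, rfl⟩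
      exact ⟨U.nbr_ne m, hms⟩
    · rintro ⟨hwv, hws⟩
      obtain ⟨m, hm, rfl⟩ := U.exists_nbr_eq (hs4.isClique hv hws hwv.symm)
      exact ⟨m, ⟨hm, hws⟩, rfl⟩
  have hpos : Set.InjOn pos A := fun s hs s' hs' h ↦ by
    rw [← insert_erase (hA s hs).2, ← insert_erase (hA s' hs').2, ← himage s hs, ← himage s' hs', h]
  have hT : ∀ t ∈ A.image pos, t ⊆ range U.n ∧ t.card = 3 ∧
      ∀ p ∈ t, ∀ q ∈ t, p < q → S.edgeGraph.Adj (U.nbr p) (U.nbr q) := by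
    simp only [mem_image]
    rintro _ ⟨s, hs, rfl⟩
    obtain ⟨hs4, hv⟩ := hA s hs
    refine ⟨filter_subset _ _, ?_, fun p hp q hq hpq ↦ ?_⟩
    · rw [← card_image_of_injOn (hinjOn s), himage s hs, card_erase_of_mem hv, hs4.card_eq]
    · exact hs4.isClique (mem_filter.1 hp).2 (mem_filter.1 hq).2 (hinjOn s |>.ne hp hq hpq.ne)
  have := card_add_two_le_of_noncrossing U.two_le
    (fun a b c d hab hbc hcd hdn ↦ U.not_adj_nbr_of_lt hvf hconn hsphere hab hbc hcd hdn) hT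
  rwa [card_image_of_injOn hpos] at this

end SimplicialSurface

/-- A connected vertex-faithful simplicial sphere `X` has at most
`(|X2| - 2)/2` re-embeddings on simplicial projective planes; equivalently, the
edge graph `E(X)` contains at most `(|X2| - 2)/2` subgraphs isomorphic to `K4`
(i.e. 4-element sets of pairwise adjacent nodes). -/
theorem k4_subgraph_bound (S : SimplicialSurface V E F)
    [Finite V] [Finite E] [Finite F]
    (hvf : S.VertexFaithful) (hconn : S.faceGraph.Connected)
    (hsphere : S.eulerChar = 2) :
    {s : Finset V | s.card = 4 ∧
      ∀ a ∈ s, ∀ b ∈ s, a ≠ b → S.edgeGraph.Adj a b}.ncard ≤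
      (Nat.card F - 2) / 2 := by
  classical
  have := Fintype.ofFinite V
  have := Fintype.ofFinite E
  have := Fintype.ofFinite F
  have hK : {s : Finset V | s.card = 4 ∧ ∀ a ∈ s, ∀ b ∈ s, a ≠ b → S.edgeGraph.Adj a b} =
      S.edgeGraph.cliqueFinset 4 := by
    ext s
    simp [SimpleGraph.isNClique_iff, SimpleGraph.isClique_iff, Set.Pairwise, and_comm]
  have hlocal : ∀ v, #{s ∈ S.edgeGraph.cliqueFinset 4 | v ∈ s} + 2 ≤ #{e | S.vinc v e} := by
    intro v
    obtain ⟨U⟩ := S.nonempty_umbrella v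
    exact (U.card_filter_mem_cliqueFinset_add_two_le hvf hconn hsphere).trans_eq
      U.card_filter_vinc.symm
  have hsum := sum_le_sum fun v (_ : v ∈ univ) ↦ hlocal v
  rw [sum_add_distrib, S.edgeGraph.sum_card_filter_mem_cliqueFinset, S.sum_card_filter_vinc,
    sum_const, card_univ, smul_eq_mul] at hsum
  have := S.two_mul_card_edges
  simp only [SimplicialSurface.eulerChar, Nat.card_eq_fintype_card] at hsphere ⊢
  rw [hK, Set.ncard_coe_finset]
  omega
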